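/- Let 1 ≤ p ≤ ∞ and let D₁, ..., Dₘ be bounded multiplication operators on L^p(X,μ) (i.e., Dᵢ f = dᵢ·f for functions dᵢ ∈ L^∞(X,μ)) such that D₁ D₂ ⋯ Dₘ = I. Then for every bounded operator A on L^p(X,μ), ‖A‖^m ≤ ‖D₁A‖·‖D₂A‖ ⋯ ‖DₘA‖, where ‖·‖ denotes the operator norm. -/

import Mathlib

open MeasureTheory ENNReal

/-!
Since `∏ dᵢ = 1`, pointwise `|g|^m = ∏ |dᵢ g|`, so the generalized Hölder inequality with `m`
exponents equal to `p` gives `‖g‖_p^m ≤ ∏ ‖dᵢ g‖_p` for every `g`. Applied to `g = A f` this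
yields `‖A f‖^m ≤ (∏ ‖Dᵢ A‖) ‖f‖^m`, and taking `m`-th roots bounds `‖A‖`.
-/

namespace MeasureTheory

variable {α : Type*} [MeasurableSpace α] {μ : Measure α}

theorem eLpNorm_prod_le_prod_eLpNorm {ι 𝕜 : Type*} [NormedCommRing 𝕜] [NormOneClass 𝕜]
    {f : ι → α → 𝕜} {p : ι → ℝ≥0∞} (s : Finset ι)
    (hf : ∀ i ∈ s, AEStronglyMeasurable (f i) μ) :
    eLpNorm (∏ i ∈ s, f i) (∑ i ∈ s, (p i)⁻¹)⁻¹ μ ≤ ∏ i ∈ s, eLpNorm (f i) (p i) μ := by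
  induction s using Finset.cons_induction with
  | empty => simpa using eLpNormEssSup_le_of_ae_enorm_bound (.of_forall fun _ => by simp)
  | cons i s hi ih =>
    rw [Finset.forall_mem_cons] at hf
    rw [Finset.prod_cons, Finset.prod_cons, Finset.sum_cons]
    have : HolderTriple (p i) (∑ j ∈ s, (p j)⁻¹)⁻¹ ((p i)⁻¹ + ∑ j ∈ s, (p j)⁻¹)⁻¹ := ⟨by simp⟩
    calc _ ≤ eLpNorm (f i) (p i) μ * eLpNorm (∏ j ∈ s, f j) (∑ j ∈ s, (p j)⁻¹)⁻¹ μ :=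
          eLpNorm_smul_le_mul_eLpNorm (Finset.aestronglyMeasurable_prod s hf.2) hf.1
      _ ≤ _ := by gcongr; exact ih hf.2

theorem eLpNorm_pow {𝕜 : Type*} [NormedDivisionRing 𝕜] (p : ℝ≥0∞) (g : α → 𝕜) {n : ℕ}
    (hn : n ≠ 0) :
    eLpNorm (g ^ n) (n * p⁻¹)⁻¹ μ = eLpNorm g p μ ^ n := by
  have hexp : (n * p⁻¹)⁻¹ * ENNReal.ofReal n = p := by
    rw [ENNReal.ofReal_natCast, ENNReal.mul_inv (by simp [hn]) (by simp), inv_inv, mul_comm,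
      ← mul_assoc, ENNReal.mul_inv_cancel (by simpa) (by simp), one_mul]
  have := eLpNorm_norm_rpow (μ := μ) g (q := n) (p := (n * p⁻¹)⁻¹) (by positivity)
  simp only [hexp, Real.rpow_natCast, ENNReal.rpow_natCast] at this
  rw [← this, ← eLpNorm_norm]
  simp only [Pi.pow_apply, norm_pow]

theorem eLpNorm_pow_card_le_prod_eLpNorm_mul {ι 𝕜 : Type*} [Fintype ι] [NormedField 𝕜]
    (p : ℝ≥0∞) (d : ι → α → 𝕜) (g : α → 𝕜) (hd : ∀ᵐ x ∂μ, ∏ i, d i x = 1)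
    (hdg : ∀ i, AEStronglyMeasurable (fun x => d i x * g x) μ) :
    eLpNorm g p μ ^ Fintype.card ι ≤ ∏ i, eLpNorm (fun x => d i x * g x) p μ := by
  rcases eq_or_ne (Fintype.card ι) 0 with hι | hι
  · have := Fintype.card_eq_zero_iff.mp hι
    simp
  have hprod : (fun x => g x ^ Fintype.card ι) =ᵐ[μ] ∏ i, fun x => d i x * g x := by
    filter_upwards [hd] with x hx
    simp [Finset.prod_mul_distrib, hx]
  calc eLpNorm g p μ ^ Fintype.card ι = eLpNorm (g ^ Fintype.card ι) (Fintype.card ι * p⁻¹)⁻¹ μ :=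
        (eLpNorm_pow p g hι).symm
    _ = eLpNorm (∏ i, fun x => d i x * g x) (∑ _ : ι, p⁻¹)⁻¹ μ := by
        rw [Finset.sum_const, Finset.card_univ, nsmul_eq_mul]
        exact eLpNorm_congr_ae hprod
    _ ≤ ∏ i, eLpNorm (fun x => d i x * g x) p μ :=
        eLpNorm_prod_le_prod_eLpNorm _ fun i _ => hdg i

theorem Lp.norm_pow_card_le_prod_norm_of_ae_eq_mul {ι 𝕜 : Type*} [Fintype ι] [NormedField 𝕜]
    {p : ℝ≥0∞} (d : ι → α → 𝕜) (hd : ∀ᵐ x ∂μ, ∏ i, d i x = 1) (g : Lp 𝕜 p μ)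
    (h : ι → Lp 𝕜 p μ) (hh : ∀ i, h i =ᵐ[μ] fun x => d i x * g x) :
    ‖g‖ ^ Fintype.card ι ≤ ∏ i, ‖h i‖ := by
  have hdg : ∀ i, AEStronglyMeasurable (fun x => d i x * g x) μ := fun i =>
    (Lp.aestronglyMeasurable (h i)).congr (hh i)
  have := eLpNorm_pow_card_le_prod_eLpNorm_mul p d g hd hdg
  simp only [← eLpNorm_congr_ae (hh _)] at this
  simp only [Lp.norm_def, ← ENNReal.toReal_pow, ← ENNReal.toReal_prod]
  exact ENNReal.toReal_mono (ENNReal.prod_ne_top fun i _ => (Lp.eLpNorm_lt_top (h i)).ne) this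

end MeasureTheory

theorem ContinuousLinearMap.opNorm_pow_le_of_forall_pow_le {𝕜 E F : Type*}
    [NontriviallyNormedField 𝕜] [SeminormedAddCommGroup E] [SeminormedAddCommGroup F]
    [NormedSpace 𝕜 E] [NormedSpace 𝕜 F] (A : E →L[𝕜] F) {n : ℕ} {C : ℝ} (hC : 0 ≤ C)
    (h : ∀ x, ‖A x‖ ^ n ≤ C * ‖x‖ ^ n) : ‖A‖ ^ n ≤ C := by
  rcases eq_or_ne n 0 with rfl | hn
  · simpa using h 0
  have hroot : ‖A‖ ≤ C ^ (n⁻¹ : ℝ) := by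
    refine A.opNorm_le_bound (by positivity) fun x => ?_
    refine le_of_pow_le_pow_left₀ hn (by positivity) ?_
    rw [mul_pow, Real.rpow_inv_natCast_pow hC hn]
    exact h x
  calc ‖A‖ ^ n ≤ (C ^ (n⁻¹ : ℝ)) ^ n := by gcongr
    _ = C := Real.rpow_inv_natCast_pow hC hn

theorem norm_pow_le_prod_norm_mul_left
    {X : Type*} [MeasurableSpace X] (μ : Measure X)
    (p : ℝ≥0∞) [Fact (1 ≤ p)] (m : ℕ)
    (D : Fin m → (Lp ℂ p μ →L[ℂ] Lp ℂ p μ)) (d : Fin m → X → ℂ)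
    (hD : ∀ i, ∀ f : Lp ℂ p μ, (D i f : X → ℂ) =ᵐ[μ] fun x => d i x * f x)
    (hprod : (fun x => ∏ i, d i x) =ᵐ[μ] fun _ => 1)
    (A : Lp ℂ p μ →L[ℂ] Lp ℂ p μ) :
    ‖A‖ ^ m ≤ ∏ i, ‖(D i).comp A‖ := by
  refine A.opNorm_pow_le_of_forall_pow_le (by positivity) fun f => ?_
  calc ‖A f‖ ^ m ≤ ∏ i, ‖D i (A f)‖ := by
        simpa only [Fintype.card_fin] using
          Lp.norm_pow_card_le_prod_norm_of_ae_eq_mul d hprod (A f) _ fun i => hD i (A f)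
    _ ≤ ∏ i, ‖(D i).comp A‖ * ‖f‖ :=
        Finset.prod_le_prod (fun _ _ => norm_nonneg _) fun i _ => (D i).comp A |>.le_opNorm f
    _ = (∏ i, ‖(D i).comp A‖) * ‖f‖ ^ m := by
        rw [Finset.prod_mul_distrib, Finset.prod_const, Finset.card_univ, Fintype.card_fin]
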